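/- For integers ℓ₁, ℓ₂ ≥ 0 and n ≥ ℓ₁ + ℓ₂ + 1, we have ∑_{L=1}^{n} (C(L-1, ℓ₁) · C(n-L, ℓ₂) / C(n, ℓ₁+ℓ₂+1)) · L² = (ℓ₁+1)(ℓ₁+2)(n+2)(n+1) / ((ℓ₁+ℓ₂+2)(ℓ₁+ℓ₂+3)) − (ℓ₁+1)(n+1)/(ℓ₁+ℓ₂+2). -/

import Mathlib

/-! Write `L = i + 1` and `n = m + 1`: the weights become `C(i, a) C(j, b) / C(m + 1, a + b + 1)`
over `i + j = m`, and the upper Vandermonde identity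
`∑_{i + j = m} C(i, a) C(j, b) = C(m + 1, a + b + 1)` says they sum to `1`.
Since `C(i, a) (i + 1)^(k) = (a + 1)^(k) C(i + k, a + k)` for rising factorials `x^(k)`, the same
identity gives every rising factorial moment `E[L^(k)] = (a + 1)^(k) (n + 1)^(k) / (a + b + 2)^(k)`,
and the second moment follows from `L² = L^(2) - L^(1)`. -/

open Finset

namespace Nat

theorem choose_mul_add_one_ascFactorial (n a k : ℕ) :
    n.choose a * (n + 1).ascFactorial k = (n + k).choose (a + k) * (a + 1).ascFactorial k := by
  induction k with
  | zero => simp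
  | succ k ih =>
    rw [ascFactorial_succ, ascFactorial_succ, mul_left_comm, ih, ← mul_assoc,
      add_right_comm, add_one_mul_choose_eq, add_right_comm a]
    simp only [← add_assoc, add_right_comm a 1 k]
    ring

theorem sum_antidiagonal_choose_mul_choose (a b n : ℕ) :
    ∑ p ∈ antidiagonal n, p.1.choose a * p.2.choose b = (n + 1).choose (a + b + 1) := by
  induction n generalizing a with
  | zero => rcases a with _ | a <;> rcases b with _ | b <;> simp [choose_eq_zero_of_lt]
  | succ n ih =>
    rw [Finset.Nat.sum_antidiagonal_succ]
    rcases a with _ | a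
    · have := ih 0
      simp only [choose_zero_right, one_mul, zero_add] at this ⊢
      rw [this, choose_succ_succ (n + 1) b]
    · rw [choose_zero_succ, zero_mul, zero_add]
      calc ∑ p ∈ antidiagonal n, (p.1 + 1).choose (a + 1) * p.2.choose b
          = ∑ p ∈ antidiagonal n,
              (p.1.choose a * p.2.choose b + p.1.choose (a + 1) * p.2.choose b) := by
            simp only [choose_succ_succ, add_mul]
        _ = (n + 1 + 1).choose (a + 1 + b + 1) := by
            rw [sum_add_distrib, ih, ih, choose_succ_succ (n + 1), add_right_comm a 1 b]

theorem sum_antidiagonal_add_choose_mul_choose (a b k n : ℕ) :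
    ∑ p ∈ antidiagonal n, (p.1 + k).choose (a + k) * p.2.choose b =
      (n + 1 + k).choose (a + b + 1 + k) := by
  induction k generalizing a n with
  | zero => exact sum_antidiagonal_choose_mul_choose a b n
  | succ k ih =>
    have h := ih (a + 1) (n + 1)
    rw [Finset.Nat.sum_antidiagonal_succ, choose_eq_zero_of_lt (by omega), zero_mul, zero_add] at h
    simp only [add_right_comm _ 1 k] at h
    simp only [← add_assoc]
    convert h using 2 <;> omega

theorem sum_antidiagonal_choose_mul_choose_mul_ascFactorial (a b k n : ℕ) :
    ∑ p ∈ antidiagonal n, p.1.choose a * p.2.choose b * (p.1 + 1).ascFactorial k =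
      (n + 1 + k).choose (a + b + 1 + k) * (a + 1).ascFactorial k := by
  simp_rw [mul_right_comm _ (choose _ b), choose_mul_add_one_ascFactorial,
    mul_right_comm _ _ (choose _ b)]
  rw [← sum_mul, sum_antidiagonal_add_choose_mul_choose]

theorem sum_Icc_one_eq_sum_antidiagonal {M : Type*} [AddCommMonoid M] (f : ℕ → ℕ → M)
    (m : ℕ) :
    ∑ L ∈ Icc 1 (m + 1), f L (m + 1 - L) = ∑ p ∈ antidiagonal m, f (p.1 + 1) p.2 := by
  rw [Finset.Nat.sum_antidiagonal_eq_sum_range_succ (fun i j => f (i + 1) j),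
    ← Ico_add_one_right_eq_Icc, sum_Ico_eq_sum_range]
  refine sum_congr (by simp) fun i _ => ?_
  congr 1 <;> omega

theorem sum_Icc_choose_mul_choose_div_mul_ascFactorial (a b k n : ℕ) (h : a + b + 1 ≤ n) :
    ∑ L ∈ Icc 1 n,
        ((L - 1).choose a * (n - L).choose b / n.choose (a + b + 1) : ℝ) * L.ascFactorial k =
      (a + 1).ascFactorial k * (n + 1).ascFactorial k / (a + b + 2).ascFactorial k := by
  obtain ⟨m, rfl⟩ : ∃ m, n = m + 1 := ⟨n - 1, by omega⟩
  have hD : ((m + 1).choose (a + b + 1) : ℝ) ≠ 0 := by exact_mod_cast (choose_pos h).ne'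
  have hA : ((a + b + 2).ascFactorial k : ℝ) ≠ 0 := by exact_mod_cast (ascFactorial_pos _ _).ne'
  rw [sum_Icc_one_eq_sum_antidiagonal fun L j =>
    ((L - 1).choose a * j.choose b / (m + 1).choose (a + b + 1) : ℝ) * L.ascFactorial k]
  simp_rw [add_tsub_cancel_right, div_mul_eq_mul_div, ← sum_div]
  rw [div_eq_div_iff hD hA]
  norm_cast
  rw [sum_antidiagonal_choose_mul_choose_mul_ascFactorial, mul_right_comm,
    ← choose_mul_add_one_ascFactorial]
  ring

end Nat

theorem stmt_0 (l1 l2 n : ℕ) (hn : l1 + l2 + 1 ≤ n) :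
    ∑ L ∈ Finset.Icc 1 n,
        ((Nat.choose (L - 1) l1 : ℝ) * (Nat.choose (n - L) l2) /
            (Nat.choose n (l1 + l2 + 1))) * (L : ℝ) ^ 2
      = ((l1 : ℝ) + 1) * ((l1 : ℝ) + 2) * ((n : ℝ) + 2) * ((n : ℝ) + 1) /
            (((l1 : ℝ) + (l2 : ℝ) + 2) * ((l1 : ℝ) + (l2 : ℝ) + 3))
        - ((l1 : ℝ) + 1) * ((n : ℝ) + 1) / ((l1 : ℝ) + (l2 : ℝ) + 2) := by
  have hsq (L : ℕ) : (L : ℝ) ^ 2 = L.ascFactorial 2 - L.ascFactorial 1 := by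
    simp only [Nat.ascFactorial_succ, Nat.ascFactorial_zero]
    push_cast
    ring
  simp_rw [hsq, mul_sub, sum_sub_distrib,
    Nat.sum_Icc_choose_mul_choose_div_mul_ascFactorial l1 l2 _ n hn]
  simp only [Nat.ascFactorial_succ, Nat.ascFactorial_zero]
  push_cast
  field_simp
  ring
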